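/- Let X be uniformly distributed on {0,1}ⁿ and let Y be obtained from X by flipping each coordinate independently with probability ε ∈ [0,1/2]. For a boolean function f : {0,1}ⁿ → {0,1}, the mutual information satisfies I(f(X); Y) = Ent(T_ε f) + Ent(T_ε(1−f)), where for a nonnegative function g on {0,1}ⁿ, Ent(g) = 𝔼[g·log₂ g] − 𝔼g·log₂ 𝔼g, and T_ε is the noise operator. -/

import Mathlib

open Finset

noncomputable def expec (n : ℕ) (f : (Fin n → Bool) → ℝ) : ℝ :=
  (∑ x : Fin n → Bool, f x) / 2 ^ n

noncomputable def walsh (n : ℕ) (S : Finset (Fin n)) (x : Fin n → Bool) : ℝ :=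
  ∏ i ∈ S, (if x i then (-1 : ℝ) else 1)

noncomputable def fcoef (n : ℕ) (f : (Fin n → Bool) → ℝ) (S : Finset (Fin n)) : ℝ :=
  expec n (fun x => f x * walsh n S x)

def comp (n : ℕ) (x : Fin n → Bool) : Fin n → Bool := fun i => !(x i)

noncomputable def evenPart (n : ℕ) (f : (Fin n → Bool) → ℝ) (x : Fin n → Bool) : ℝ :=
  (f x + f (comp n x)) / 2

noncomputable def oddPart (n : ℕ) (f : (Fin n → Bool) → ℝ) (x : Fin n → Bool) : ℝ :=
  f x - evenPart n f x

noncomputable def noiseK (n : ℕ) (ε : ℝ) (x y : Fin n → Bool) : ℝ :=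
  ∏ i : Fin n, (if x i = y i then 1 - ε else ε)

noncomputable def noiseOp (n : ℕ) (ε : ℝ) (f : (Fin n → Bool) → ℝ) (x : Fin n → Bool) : ℝ :=
  ∑ y : Fin n → Bool, noiseK n ε x y * f y

noncomputable def entro (n : ℕ) (g : (Fin n → Bool) → ℝ) : ℝ :=
  expec n (fun x => g x * Real.logb 2 (g x)) - expec n g * Real.logb 2 (expec n g)

noncomputable def varia (n : ℕ) (g : (Fin n → Bool) → ℝ) : ℝ :=
  expec n (fun x => g x ^ 2) - (expec n g) ^ 2

noncomputable def jointP (n : ℕ) (ε : ℝ) (f : (Fin n → Bool) → ℝ) (b : Bool)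
    (y : Fin n → Bool) : ℝ :=
  (∑ x : Fin n → Bool, if f x = (if b then (1 : ℝ) else 0) then noiseK n ε x y else 0) / 2 ^ n

noncomputable def margB (n : ℕ) (f : (Fin n → Bool) → ℝ) (b : Bool) : ℝ :=
  (∑ x : Fin n → Bool, if f x = (if b then (1 : ℝ) else 0) then (1 : ℝ) else 0) / 2 ^ n

noncomputable def margY (n : ℕ) (ε : ℝ) (f : (Fin n → Bool) → ℝ) (y : Fin n → Bool) : ℝ :=
  ∑ b : Bool, jointP n ε f b y

/-- Mutual information (in bits) between the bit `f(X)` and the noisy copy `Y`,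
where `X` is uniform on the hypercube and `Y` is obtained by flipping each
coordinate of `X` independently with probability `ε`. Terms with zero joint
probability contribute `0` (since `Real.logb 2 0 = 0`). -/
noncomputable def mutInfo (n : ℕ) (ε : ℝ) (f : (Fin n → Bool) → ℝ) : ℝ :=
  ∑ y : Fin n → Bool, ∑ b : Bool,
    jointP n ε f b y * Real.logb 2 (jointP n ε f b y / (margB n f b * margY n ε f y))

noncomputable def binEnt (x : ℝ) : ℝ := -x * Real.logb 2 x - (1 - x) * Real.logb 2 (1 - x)

/-! Since the noise kernel is symmetric, the joint law of `(f X, Y)` has density `T_ε f (y) / 2ⁿ`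
at `(1, y)` and `T_ε (1 - f) (y) / 2ⁿ` at `(0, y)`. These add up to `2⁻ⁿ` times a row sum of the
kernel, so `Y` is uniform; the bit has law `(𝔼 f, 𝔼 (1 - f))`, and `T_ε` preserves expectations
because the kernel is also column-stochastic. Hence each half of the mutual information is the
relative entropy of `T_ε g / 2ⁿ` with respect to `𝔼 g` times the uniform measure, i.e. `Ent (T_ε g)`. -/

section NoiseOperator

variable {n : ℕ} {ε : ℝ}

lemma noiseK_comm (x y : Fin n → Bool) : noiseK n ε x y = noiseK n ε y x := by
  simp only [noiseK, eq_comm]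

lemma sum_noiseK_left (y : Fin n → Bool) : ∑ x, noiseK n ε x y = 1 := by
  unfold noiseK
  rw [← Fintype.piFinset_univ,
    ← prod_univ_sum (fun _ : Fin n => (univ : Finset Bool))
      (fun i b => if b = y i then 1 - ε else ε)]
  refine prod_eq_one fun i _ => ?_
  cases y i <;> simp

lemma sum_noiseK_right (x : Fin n → Bool) : ∑ y, noiseK n ε x y = 1 := by
  simpa only [noiseK_comm x] using sum_noiseK_left x

lemma expec_noiseOp (g : (Fin n → Bool) → ℝ) : expec n (noiseOp n ε g) = expec n g := by
  simp only [expec, noiseOp]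
  rw [sum_comm]
  simp only [← sum_mul, sum_noiseK_left, one_mul]

lemma noiseOp_add_noiseOp_one_sub (f : (Fin n → Bool) → ℝ) (y : Fin n → Bool) :
    noiseOp n ε f y + noiseOp n ε (fun x => 1 - f x) y = 1 := by
  simp only [noiseOp, ← sum_add_distrib, ← mul_add, add_sub_cancel, mul_one]
  exact sum_noiseK_right y

lemma noiseOp_eq_zero_of_expec_eq_zero {f : (Fin n → Bool) → ℝ} (hf : ∀ x, 0 ≤ f x)
    (h : expec n (noiseOp n ε f) = 0) (y : Fin n → Bool) : noiseOp n ε f y = 0 := by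
  rw [expec_noiseOp, expec, div_eq_zero_iff, sum_eq_zero_iff_of_nonneg fun x _ => hf x] at h
  rcases h with h | h
  · simp [noiseOp, h]
  · exact absurd h (by positivity)

end NoiseOperator

lemma sum_mul_logb_div_eq_entro {n : ℕ} (g : (Fin n → Bool) → ℝ)
    (hg : expec n g = 0 → ∀ y, g y = 0) :
    ∑ y, g y / 2 ^ n * Real.logb 2 (g y / 2 ^ n / (expec n g * (1 / 2 ^ n))) = entro n g := by
  by_cases hE : expec n g = 0
  · obtain rfl : g = 0 := funext (hg hE)
    simp [entro, expec]
  have hterm : ∀ y, g y / 2 ^ n * Real.logb 2 (g y / 2 ^ n / (expec n g * (1 / 2 ^ n)))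
      = (g y * Real.logb 2 (g y) - g y * Real.logb 2 (expec n g)) / 2 ^ n := by
    intro y
    rcases eq_or_ne (g y) 0 with hy | hy
    · simp [hy]
    have hratio : g y / 2 ^ n / (expec n g * (1 / 2 ^ n)) = g y / expec n g := by
      field_simp
    rw [hratio, Real.logb_div hy hE]
    ring
  rw [sum_congr rfl fun y _ => hterm y]
  simp only [entro, expec]
  rw [← sum_div, sum_sub_distrib, ← sum_mul]
  ring

section BitChannel

variable {n : ℕ} {ε : ℝ} {f : (Fin n → Bool) → ℝ}

lemma jointP_true (hf : ∀ x, f x = 0 ∨ f x = 1) (y : Fin n → Bool) :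
    jointP n ε f true y = noiseOp n ε f y / 2 ^ n := by
  simp only [jointP, noiseOp]
  congr 1
  refine sum_congr rfl fun x _ => ?_
  rcases hf x with h | h <;> simp [h, noiseK_comm y x]

lemma jointP_false (hf : ∀ x, f x = 0 ∨ f x = 1) (y : Fin n → Bool) :
    jointP n ε f false y = noiseOp n ε (fun x => 1 - f x) y / 2 ^ n := by
  simp only [jointP, noiseOp]
  congr 1
  refine sum_congr rfl fun x _ => ?_
  rcases hf x with h | h <;> simp [h, noiseK_comm y x]

lemma margY_eq (hf : ∀ x, f x = 0 ∨ f x = 1) (y : Fin n → Bool) :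
    margY n ε f y = 1 / 2 ^ n := by
  rw [margY, Fintype.sum_bool, jointP_true hf, jointP_false hf, ← add_div,
    noiseOp_add_noiseOp_one_sub]

lemma margB_true (hf : ∀ x, f x = 0 ∨ f x = 1) : margB n f true = expec n f := by
  simp only [margB, expec]
  congr 1
  refine sum_congr rfl fun x _ => ?_
  rcases hf x with h | h <;> simp [h]

lemma margB_false (hf : ∀ x, f x = 0 ∨ f x = 1) :
    margB n f false = expec n (fun x => 1 - f x) := by
  simp only [margB, expec]
  congr 1
  refine sum_congr rfl fun x _ => ?_
  rcases hf x with h | h <;> simp [h]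

end BitChannel

theorem stmt_12_general (n : ℕ) (ε : ℝ)
    (f : (Fin n → Bool) → ℝ) (hf : ∀ x, f x = 0 ∨ f x = 1) :
    mutInfo n ε f = entro n (noiseOp n ε f) + entro n (noiseOp n ε (fun x => 1 - f x)) := by
  have hf₀ : ∀ x, 0 ≤ f x := fun x => by rcases hf x with h | h <;> simp [h]
  have hf₁ : ∀ x, 0 ≤ 1 - f x := fun x => by rcases hf x with h | h <;> simp [h]
  rw [← sum_mul_logb_div_eq_entro _ (noiseOp_eq_zero_of_expec_eq_zero hf₀),
    ← sum_mul_logb_div_eq_entro _ (noiseOp_eq_zero_of_expec_eq_zero hf₁), ← sum_add_distrib]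
  refine sum_congr rfl fun y _ => ?_
  rw [Fintype.sum_bool, jointP_true hf, jointP_false hf, margB_true hf, margB_false hf,
    margY_eq hf, expec_noiseOp, expec_noiseOp]

theorem stmt_12 (n : ℕ) (ε : ℝ) (h0 : 0 ≤ ε) (h1 : ε ≤ 1/2)
    (f : (Fin n → Bool) → ℝ) (hf : ∀ x, f x = 0 ∨ f x = 1) :
    mutInfo n ε f = entro n (noiseOp n ε f) + entro n (noiseOp n ε (fun x => 1 - f x)) :=
  stmt_12_general n ε f hf
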